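/- arXiv:1312.4163 — 8 statements merged into one kernel-verified Lean document; each statement's English description precedes it below -/
import Mathlib

section
/- Let A be a real m×n matrix and b ∈ ℝ^m. If x is the unique least ℓ1-norm nonnegative solution to the system Ax = b, then there exists a vector η ∈ ℝ^n in the range space R(Aᵀ) = {Aᵀu : u ∈ ℝ^m} such that ηᵢ = 1 for all i ∈ J₊ and ηᵢ < 1 for all i ∉ J₊, where J₊ = {i : xᵢ > 0}. -/
/-!
If `d ∈ ker A` is nonnegative off `J₊` and `∑ d ≤ 0`, then `x + t d` is, for small `t > 0`, a
nonnegative solution of no larger ℓ1-norm, so uniqueness forces `d = 0`. In other words the map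
`d ↦ (d restricted to the complement of J₊, -∑ d)` sends no vector of `ker A` to a nonzero
nonnegative one, and Stiemke's transposition theorem gives `y > 0` and `u` with
`(uᵀA)_j = y_j [j ∉ J₊] - τ`, where `τ > 0` is the last entry of `y`. Then `η = -Aᵀu / τ`.
-/

open Matrix

/-- `x` is the unique least ℓ1-norm nonnegative solution to the system `A x = b`. -/
def uniqueLeastL1 {m n : ℕ} (A : Matrix (Fin m) (Fin n) ℝ) (b : Fin m → ℝ)
    (x : Fin n → ℝ) : Prop :=
  A.mulVec x = b ∧ 0 ≤ x ∧
    ∀ w : Fin n → ℝ, A.mulVec w = b → 0 ≤ w → w ≠ x → ∑ i, |x i| < ∑ i, |w i|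

section Stiemke

variable {ι κ μ : Type*} [Fintype ι] [Fintype κ]

/-- Stiemke's theorem: separate the standard simplex from the range of `B`. -/
theorem Matrix.exists_pos_vecMul_eq_zero (B : Matrix κ ι ℝ)
    (hB : ∀ d, 0 ≤ B *ᵥ d → B *ᵥ d = 0) : ∃ y : κ → ℝ, (∀ k, 0 < y k) ∧ y ᵥ* B = 0 := by
  classical
  set W := LinearMap.range B.mulVecLin
  have hdisj : Disjoint (stdSimplex ℝ κ) (W : Set (κ → ℝ)) := by
    rw [Set.disjoint_left]
    rintro _ ⟨hp0, hp1⟩ ⟨d, rfl⟩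
    simp [hB d hp0] at hp1
  obtain ⟨f, s, t, hfs, hst, hft⟩ := geometric_hahn_banach_compact_closed
    (convex_stdSimplex ℝ κ) (isCompact_stdSimplex ℝ κ) W.convex W.closed_of_finiteDimensional
    hdisj
  have hfW : ∀ w ∈ W, f w = 0 := by
    intro w hw
    by_contra hne
    have := hft (((t - 1) / f w) • w) (W.smul_mem _ hw)
    rw [map_smul, smul_eq_mul, div_mul_cancel₀ _ hne] at this
    linarith
  have hs : s < 0 := hst.trans (by simpa using hft 0 W.zero_mem)
  set y : κ → ℝ := fun k => -f (Pi.single k 1)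
  have hf : ∀ z, f z = -(y ⬝ᵥ z) := by
    intro z
    conv_lhs => rw [pi_eq_sum_univ' z]
    simp [y, dotProduct, mul_comm]
  refine ⟨y, fun k => by linarith [hfs _ (single_mem_stdSimplex ℝ k)], ?_⟩
  have hyB : ∀ d, (y ᵥ* B) ⬝ᵥ d = 0 := fun d => by
    rw [← dotProduct_mulVec, ← neg_eq_zero, ← hf]
    exact hfW _ ⟨d, rfl⟩
  exact dotProduct_self_eq_zero.mp (hyB _)

/-- The constraint `A d = 0` is encoded by the two blocks `A` and `-A` of inequalities. -/
theorem Matrix.exists_pos_vecMul_eq_vecMul [Fintype μ] (A : Matrix μ ι ℝ) (B : Matrix κ ι ℝ)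
    (hB : ∀ d, A *ᵥ d = 0 → 0 ≤ B *ᵥ d → B *ᵥ d = 0) :
    ∃ y u, (∀ k, 0 < y k) ∧ y ᵥ* B = u ᵥ* A := by
  obtain ⟨y, hy, hyB⟩ := (fromRows (fromRows A (-A)) B).exists_pos_vecMul_eq_zero fun d hd => by
    simp only [fromRows_mulVec, Sum.nonneg_elim_iff, neg_mulVec, Left.nonneg_neg_iff] at hd
    obtain ⟨⟨hA, hA'⟩, hBd⟩ := hd
    have hAd : A *ᵥ d = 0 := le_antisymm hA' hA
    simp [hB d hAd hBd, hAd, neg_mulVec]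
  refine ⟨y ∘ Sum.inr, y ∘ Sum.inl ∘ Sum.inr - y ∘ Sum.inl ∘ Sum.inl, fun k => hy _, ?_⟩
  simp only [vecMul_fromRows, vecMul_neg, Function.comp_assoc] at hyB
  rw [sub_vecMul]
  linear_combination hyB

end Stiemke

open Filter Topology in
theorem uniqueLeastL1.eq_zero_of_mulVec_eq_zero {m n : ℕ} {A : Matrix (Fin m) (Fin n) ℝ}
    {b : Fin m → ℝ} {x : Fin n → ℝ} (h : uniqueLeastL1 A b x) {d : Fin n → ℝ}
    (hAd : A *ᵥ d = 0) (hd : ∀ j, ¬ 0 < x j → 0 ≤ d j) (hsum : ∑ j, d j ≤ 0) : d = 0 := by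
  obtain ⟨hAx, hx, hmin⟩ := h
  have hfeasible : ∀ᶠ t in 𝓝[>] (0 : ℝ), 0 ≤ x + t • d := by
    simp only [Pi.le_def, Pi.zero_apply, Pi.add_apply, Pi.smul_apply, smul_eq_mul]
    refine eventually_all.2 fun j => ?_
    by_cases hxj : 0 < x j
    · have : Tendsto (fun t : ℝ => x j + t * d j) (𝓝[>] 0) (𝓝 (x j)) :=
        tendsto_nhdsWithin_of_tendsto_nhds (by simpa using
          (show Continuous fun t : ℝ => x j + t * d j by fun_prop).tendsto 0)
      exact (this.eventually_const_lt hxj).mono fun _ => le_of_lt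
    · filter_upwards [self_mem_nhdsWithin] with t (ht : 0 < t)
      exact add_nonneg (hx j) (mul_nonneg ht.le (hd j hxj))
  obtain ⟨t, hxt, ht⟩ := (hfeasible.and self_mem_nhdsWithin).exists
  by_contra hne
  have hlt := hmin (x + t • d) (by simp [mulVec_add, mulVec_smul, hAx, hAd]) hxt
    (by simpa [ne_of_gt ht] using hne)
  rw [Finset.sum_congr rfl fun i _ => abs_of_nonneg (hx i),
    Finset.sum_congr rfl fun i _ => abs_of_nonneg (hxt i)] at hlt
  simp only [Pi.add_apply, Pi.smul_apply, smul_eq_mul, Finset.sum_add_distrib,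
    ← Finset.mul_sum] at hlt
  nlinarith

theorem stmt_1 {m n : ℕ} (A : Matrix (Fin m) (Fin n) ℝ) (b : Fin m → ℝ)
    (x : Fin n → ℝ) (h : uniqueLeastL1 A b x) :
    ∃ η : Fin n → ℝ, (∃ u : Fin m → ℝ, A.transpose.mulVec u = η) ∧
      (∀ i, 0 < x i → η i = 1) ∧ (∀ i, ¬ 0 < x i → η i < 1) := by
  classical
  set z : Fin n → ℝ := fun j => if 0 < x j then 0 else 1
  let B : Matrix (Fin n ⊕ Unit) (Fin n) ℝ := fromRows (diagonal z) (replicateRow Unit (-1))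
  obtain ⟨y, u, hy, hyu⟩ := exists_pos_vecMul_eq_vecMul A B fun d hAd hBd => by
    have hd0 : d = 0 := h.eq_zero_of_mulVec_eq_zero hAd
      (fun j hj => by simpa [B, z, hj, mulVec_diagonal] using hBd (Sum.inl j))
      (by simpa [B, replicateRow_mulVec_eq_const, dotProduct] using hBd (Sum.inr ()))
    rw [hd0, mulVec_zero]
  have hτ : 0 < y (Sum.inr ()) := hy _
  have huA : ∀ j, (u ᵥ* A) j = y (Sum.inl j) * z j - y (Sum.inr ()) := fun j => by
    have := congrFun hyu j
    simp only [B, vecMul_fromRows, Pi.add_apply, Function.comp_apply, vecMul_diagonal] at this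
    simp only [vecMul, dotProduct, replicateRow_apply, Finset.univ_unique, Finset.sum_singleton,
      Function.comp_apply, Pi.neg_apply, Pi.one_apply] at this ⊢
    linarith
  refine ⟨-(y (Sum.inr ()))⁻¹ • (u ᵥ* A),
    ⟨-(y (Sum.inr ()))⁻¹ • u, by rw [mulVec_transpose, smul_vecMul]⟩, fun j hj => ?_, fun j hj => ?_⟩
  · simp [huA, z, hj, hτ.ne']
  · have := hy (Sum.inl j)
    simp only [Pi.smul_apply, huA, z, hj, if_false, smul_eq_mul]
    field_simp
    linarith
end

section
/- Let A be a real m×n matrix, b ∈ ℝ^m, and let x ≥ 0 be a nonnegative solution to Ax = b with J₊ = {i : xᵢ > 0}. If there exists η ∈ R(Aᵀ) with ηᵢ = 1 for all i ∈ J₊ and ηᵢ < 1 for all i ∉ J₊, and the matrix M obtained by appending the all-ones row e_{J₊}ᵀ below A_{J₊} has full column rank, then x is the unique least ℓ1-norm nonnegative solution to the system Ax = b. -/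
/-! The dual certificate `η = Aᵀ u` gives `η ⬝ᵥ w = u ⬝ᵥ b = η ⬝ᵥ x = ‖x‖₁` for every solution `w`,
while `η ≤ 1` gives `η ⬝ᵥ w ≤ ‖w‖₁` for `w ≥ 0`. In the equality case `w` vanishes where `η < 1`,
i.e. off `J₊`; then `w - x` is supported on `J₊`, lies in the kernel of `A` and has zero sum, so it
vanishes because the columns of `A_{J₊}` augmented by a row of ones are linearly independent. -/

open Matrix

theorem Fintype.sum_subtype_eq_sum_of_eq_zero {ι M : Type*} [Fintype ι] [AddCommMonoid M]
    {p : ι → Prop} [DecidablePred p] {f : ι → M} (hf : ∀ i, ¬ p i → f i = 0) :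
    ∑ j : {i // p i}, f j = ∑ i, f i := by
  rw [← Finset.sum_subtype (Finset.univ.filter p) (by simp), Finset.sum_filter_of_ne]
  exact fun i _ hi => by_contra fun hp => hi (hf i hp)

theorem Matrix.eq_zero_of_linearIndependent_augmentedColumns {R ι κ : Type*} [CommRing R]
    [Fintype ι] (A : Matrix κ ι R) {p : ι → Prop}
    (hA : LinearIndependent R (fun j : {i // p i} =>
      (Sum.elim (fun k => A k j.1) (fun _ : Unit => (1 : R)) : κ ⊕ Unit → R)))
    {d : ι → R} (hd : ∀ i, ¬ p i → d i = 0) (hAd : A *ᵥ d = 0) (hsum : ∑ i, d i = 0) :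
    d = 0 := by
  classical
  have hsub (f : ι → R) : ∑ j : {i // p i}, f j * d j = ∑ i, f i * d i :=
    Fintype.sum_subtype_eq_sum_of_eq_zero (f := fun i => f i * d i) fun i hi => by simp [hd i hi]
  have hcomb : ∑ j : {i // p i}, d j • (Sum.elim (fun k => A k j.1) (fun _ : Unit => (1 : R)) :
      κ ⊕ Unit → R) = 0 := by
    ext (k | _)
    · simpa [mul_comm, hsub (A k), mulVec, dotProduct] using congrFun hAd k
    · simpa using (hsub 1).trans (by simpa using hsum)
  funext i
  by_cases hi : p i
  · exact Fintype.linearIndependent_iff.mp hA _ hcomb ⟨i, hi⟩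
  · exact hd i hi

theorem Matrix.dotProduct_eq_sum_of_eq_one {R ι : Type*} [NonAssocSemiring R] [Fintype ι]
    {η w : ι → R} (h : ∀ i, w i ≠ 0 → η i = 1) : η ⬝ᵥ w = ∑ i, w i :=
  Finset.sum_congr rfl fun i _ => by
    by_cases hw : w i = 0
    · simp [hw]
    · simp [h i hw]

section OrderedRing

variable {R ι : Type*} [CommRing R] [LinearOrder R] [IsStrictOrderedRing R] [Fintype ι]
  {η w : ι → R}

theorem Matrix.dotProduct_le_sum_of_le_one (hη : ∀ i, η i ≤ 1) (hw : 0 ≤ w) :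
    η ⬝ᵥ w ≤ ∑ i, w i :=
  Finset.sum_le_sum fun i _ => mul_le_of_le_one_left (hw i) (hη i)

theorem Matrix.eq_zero_of_dotProduct_eq_sum (hη : ∀ i, η i ≤ 1) (hw : 0 ≤ w)
    (h : η ⬝ᵥ w = ∑ i, w i) {i : ι} (hi : η i < 1) : w i = 0 := by
  have hterm := (Finset.sum_eq_sum_iff_of_le fun i _ => mul_le_of_le_one_left (hw i) (hη i)).mp h
    i (Finset.mem_univ i)
  by_contra hne
  exact (mul_lt_of_lt_one_left ((hw i).lt_of_ne' hne) hi).ne hterm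

end OrderedRing

theorem stmt_3 {m n : ℕ} (A : Matrix (Fin m) (Fin n) ℝ) (b : Fin m → ℝ)
    (x : Fin n → ℝ) (hAx : A.mulVec x = b) (hx : 0 ≤ x)
    (hRSP : ∃ η : Fin n → ℝ, (∃ u : Fin m → ℝ, A.transpose.mulVec u = η) ∧
      (∀ i, 0 < x i → η i = 1) ∧ (∀ i, ¬ 0 < x i → η i < 1))
    (hM : LinearIndependent ℝ (fun j : {i : Fin n // 0 < x i} =>
      (Sum.elim (fun k : Fin m => A k j.1) (fun _ : Unit => (1 : ℝ)) :
        Fin m ⊕ Unit → ℝ))) :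
    uniqueLeastL1 A b x := by
  obtain ⟨η, ⟨u, rfl⟩, hη_supp, hη_off⟩ := hRSP
  have hx_off (i) (hi : ¬ 0 < x i) : x i = 0 := (not_lt.mp hi).antisymm (hx i)
  have hη_le (i) : (Aᵀ *ᵥ u) i ≤ 1 := by
    by_cases hi : 0 < x i
    exacts [(hη_supp i hi).le, (hη_off i hi).le]
  refine ⟨hAx, hx, fun w hAw hw hwx => ?_⟩
  simp only [abs_of_nonneg (hx _), abs_of_nonneg (hw _)]
  have hx_sum : ∑ i, x i = (Aᵀ *ᵥ u) ⬝ᵥ w := by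
    rw [← dotProduct_eq_sum_of_eq_one fun i hi => hη_supp i ((hx i).lt_of_ne' hi),
      dotProduct_comm, dotProduct_transpose_mulVec, dotProduct_comm _ w,
      dotProduct_transpose_mulVec, hAx, hAw]
  refine hx_sum ▸ (dotProduct_le_sum_of_le_one hη_le hw).lt_of_ne fun heq => hwx ?_
  have hw_off (i) (hi : ¬ 0 < x i) : w i = 0 :=
    eq_zero_of_dotProduct_eq_sum hη_le hw heq (hη_off i hi)
  rw [← sub_eq_zero]
  exact A.eq_zero_of_linearIndependent_augmentedColumns hM
    (fun i hi => by simp [hw_off i hi, hx_off i hi]) (by simp [mulVec_sub, hAx, hAw])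
    (by simp [Finset.sum_sub_distrib, hx_sum, heq])
end

section
/- Let A be a real m×n matrix, b ∈ ℝ^m, and let x be a nonnegative solution to Ax = b with J₊ = {i : xᵢ > 0}. Then x is the unique least ℓ1-norm nonnegative solution to the system Ax = b if and only if (i) there exists η ∈ R(Aᵀ) with ηᵢ = 1 for all i ∈ J₊ and ηᵢ < 1 for all i ∉ J₊, and (ii) the matrix M obtained by appending the all-ones row e_{J₊}ᵀ below A_{J₊} has full column rank. -/
/-!
If `η = Aᵀu` is `1` on `J₊` and `< 1` off it, then every nonnegative solution `w` satisfies
`‖w‖₁ - ‖x‖₁ = ∑ᵢ (1 - ηᵢ) wᵢ ≥ 0`, because `ηᵀw = uᵀb = ηᵀx = ‖x‖₁`. Equality forces `w` to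
vanish off `J₊`, so `w - x` is in the kernel of the augmented matrix and hence zero.

Conversely, if `d ≠ 0`, `Ad = 0` and `d ≥ 0` off `J₊`, then `x + t d` is a nonnegative solution
for small `t > 0`, so minimality gives `∑ d > 0`. For `d` supported on `J₊` this is the rank
condition. It also rules out the Farkas alternative of a linear system whose solutions rescale
to a certificate `η`.
-/

open Matrix

section Farkas

variable {𝕜 ι κ : Type*} [Field 𝕜] [LinearOrder 𝕜] [IsStrictOrderedRing 𝕜] [Fintype κ]

theorem farkas_finset (s : Finset ι) (v : ι → κ → 𝕜) (g : κ → 𝕜) :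
    (∃ c : ι → 𝕜, 0 ≤ c ∧ ∑ i ∈ s, c i • v i = g) ∨
      ∃ d, (∀ i ∈ s, 0 ≤ v i ⬝ᵥ d) ∧ g ⬝ᵥ d < 0 := by
  classical
  induction s using Finset.induction_on generalizing v g with
  | empty =>
    by_cases hg : g = 0
    · exact .inl ⟨0, le_rfl, by simp [hg]⟩
    · refine .inr ⟨-g, by simp, ?_⟩
      rw [dotProduct_neg, neg_lt_zero]
      exact (Fintype.sum_nonneg fun i => mul_self_nonneg (g i)).lt_of_ne'
        (dotProduct_self_eq_zero.not.2 hg)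
  | insert p s hp ih =>
    have sum_insert_update : ∀ (c : ι → 𝕜) (a : 𝕜),
        ∑ i ∈ insert p s, Function.update c p a i • v i = a • v p + ∑ i ∈ s, c i • v i := by
      intro c a
      rw [Finset.sum_insert hp, Function.update_self]
      congr 1
      exact Finset.sum_congr rfl fun i hi => by
        rw [Function.update_of_ne (ne_of_mem_of_not_mem hi hp)]
    have update_nonneg : ∀ (c : ι → 𝕜) (a : 𝕜), 0 ≤ c → 0 ≤ a → 0 ≤ Function.update c p a := by
      intro c a hc ha i
      rcases eq_or_ne i p with rfl | hi
      · simpa using ha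
      · simpa [hi] using hc i
    rcases ih v g with ⟨c, hc, hcg⟩ | ⟨d, hd, hgd⟩
    · exact .inl ⟨_, update_nonneg c 0 hc le_rfl, by rw [sum_insert_update, zero_smul, zero_add, hcg]⟩
    by_cases hpd : 0 ≤ v p ⬝ᵥ d
    · exact .inr ⟨d, Finset.forall_mem_insert _ _ _ |>.2 ⟨hpd, hd⟩, hgd⟩
    push Not at hpd
    -- Fourier–Motzkin: project along `v p` onto the hyperplane `d⊥` and recurse there.
    set r : (κ → 𝕜) → 𝕜 := fun z => z ⬝ᵥ d / v p ⬝ᵥ d with hr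
    set f : (κ → 𝕜) → κ → 𝕜 := fun z => z - r z • v p with hf
    rcases ih (f ∘ v) (f g) with ⟨c, hc, hcg⟩ | ⟨d', hd', hgd'⟩
    · refine .inl ⟨_, update_nonneg c (r g - ∑ i ∈ s, c i * r (v i)) hc ?_, ?_⟩
      · have hrg : 0 < r g := div_pos_of_neg_of_neg hgd hpd
        have hrv : ∀ i ∈ s, c i * r (v i) ≤ 0 := fun i hi =>
          mul_nonpos_of_nonneg_of_nonpos (hc i) (div_nonpos_of_nonneg_of_nonpos (hd i hi) hpd.le)
        linarith [Finset.sum_nonpos hrv]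
      · simp only [Function.comp_apply, hf, smul_sub, Finset.sum_sub_distrib, smul_smul] at hcg
        rw [sub_eq_iff_eq_add] at hcg
        rw [sum_insert_update, sub_smul, Finset.sum_smul, hcg]
        abel
    · set d'' := d' - (v p ⬝ᵥ d' / v p ⬝ᵥ d) • d
      have key : ∀ z, z ⬝ᵥ d'' = f z ⬝ᵥ d' := by
        intro z
        simp only [d'', hf, hr, dotProduct_sub, sub_dotProduct, dotProduct_smul,
          smul_dotProduct, smul_eq_mul]
        field_simp
      refine .inr ⟨d'', Finset.forall_mem_insert _ _ _ |>.2 ⟨?_, fun i hi => ?_⟩, ?_⟩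
      · rw [key]
        simp [f, r, hpd.ne]
      · rw [key]; exact hd' i hi
      · rw [key]; exact hgd'

theorem farkas [Fintype ι] (v : ι → κ → 𝕜) (g : κ → 𝕜) :
    (∃ c : ι → 𝕜, 0 ≤ c ∧ ∑ i, c i • v i = g) ∨
      ∃ d, (∀ i, 0 ≤ v i ⬝ᵥ d) ∧ g ⬝ᵥ d < 0 := by
  simpa using farkas_finset Finset.univ v g

theorem farkas_transpose {μ : Type*} [Fintype ι] [Fintype μ] (A : Matrix μ κ 𝕜)
    (v : ι → κ → 𝕜) (g : κ → 𝕜) :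
    (∃ (u : μ → 𝕜) (c : ι → 𝕜), 0 ≤ c ∧ Aᵀ *ᵥ u + ∑ i, c i • v i = g) ∨
      ∃ d, A *ᵥ d = 0 ∧ (∀ i, 0 ≤ v i ⬝ᵥ d) ∧ g ⬝ᵥ d < 0 := by
  rcases farkas (Sum.elim v (Sum.elim (fun k => A k) (fun k => -A k))) g with
    ⟨c, hc, hcg⟩ | ⟨d, hd, hgd⟩
  · refine .inl ⟨fun k => c (.inr (.inl k)) - c (.inr (.inr k)), c ∘ .inl, fun i => hc _, ?_⟩
    rw [← hcg, mulVec_transpose, vecMul_eq_sum]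
    simp only [Fintype.sum_sum_type, Sum.elim_inl, Sum.elim_inr, sub_smul, smul_neg,
      Finset.sum_sub_distrib, Finset.sum_neg_distrib, Function.comp_apply]
    abel
  · refine .inr ⟨d, funext fun k => ?_, fun i => hd (.inl i), hgd⟩
    have h₁ := hd (.inr (.inl k))
    have h₂ := hd (.inr (.inr k))
    simp only [Sum.elim_inr, Sum.elim_inl, neg_dotProduct, neg_nonneg] at h₁ h₂
    exact le_antisymm h₂ h₁

theorem exists_transpose_mulVec_eq_one_of_sum_pos {μ : Type*} [Fintype μ] (A : Matrix μ κ 𝕜)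
    (s : Set κ) (h : ∀ d, A *ᵥ d = 0 → (∀ i ∉ s, 0 ≤ d i) → d ≠ 0 → 0 < ∑ i, d i) :
    ∃ u : μ → 𝕜, (∀ i ∈ s, (Aᵀ *ᵥ u) i = 1) ∧ ∀ i ∉ s, (Aᵀ *ᵥ u) i < 1 := by
  classical
  -- Solve `Aᵀu - ρ𝟙 + ∑_{j ∉ s} σⱼ eⱼ = 𝟙ₛ` with `ρ, σ ≥ 0`; then `Aᵀu / (1 + ρ)` works.
  rcases farkas_transpose A
      (Option.elim · (-1) fun j => Pi.single j (if j ∈ s then 0 else 1)) (s.indicator 1) with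
    ⟨u, c, hc, hcg⟩ | ⟨d, hAd, hd, hgd⟩
  · replace hc : ∀ i, 0 ≤ c i := hc
    have hρ : 0 < 1 + c none := by linarith [hc none]
    have hcoord : ∀ i, (Aᵀ *ᵥ u) i =
        s.indicator 1 i + c none - if i ∈ s then 0 else c (some i) := by
      intro i
      have := congrFun hcg i
      simp only [Fintype.sum_option, Option.elim_none, Option.elim_some, Pi.add_apply,
        Pi.neg_apply, Pi.one_apply, smul_neg, Pi.smul_apply, smul_eq_mul, mul_one,
        Finset.sum_apply, Pi.single_apply, mul_ite, mul_zero, Finset.sum_ite_eq,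
        Finset.mem_univ, ↓reduceIte] at this
      linear_combination this
    refine ⟨(1 + c none)⁻¹ • u, fun i hi => ?_, fun i hi => ?_⟩
    · rw [mulVec_smul, Pi.smul_apply, hcoord, smul_eq_mul]
      simp only [hi, Set.indicator_of_mem, Pi.one_apply, ↓reduceIte, sub_zero]
      field_simp
    · rw [mulVec_smul, Pi.smul_apply, hcoord, smul_eq_mul]
      simp only [hi, not_false_eq_true, Set.indicator_of_notMem, zero_add, ↓reduceIte]
      rw [inv_mul_lt_one₀ hρ]
      linarith [hc (some i)]
  · exfalso
    have hsum : ∑ i, d i ≤ 0 := by simpa [one_dotProduct] using hd none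
    have hds : ∀ i ∉ s, 0 ≤ d i := fun i hi => by simpa [hi] using hd (some i)
    have hd0 : d ≠ 0 := by rintro rfl; simp at hgd
    exact (h d hAd hds hd0).not_ge hsum

end Farkas

theorem linearIndepOn_iff_of_fintype {R M ι : Type*} [Ring R] [AddCommGroup M]
    [Module R M] [Fintype ι] {v : ι → M} {s : Set ι} :
    LinearIndepOn R v s ↔ ∀ d : ι → R, (∀ i ∉ s, d i = 0) → ∑ i, d i • v i = 0 → d = 0 := by
  classical
  rw [linearIndepOn_iff]
  constructor
  · intro h d hds hsum
    have := h (Finsupp.equivFunOnFinite.symm d) ((Finsupp.mem_supported' R _).2 hds)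
      (by simpa [Finsupp.linearCombination_apply, Finsupp.sum_fintype] using hsum)
    simpa using congrArg (⇑) this
  · intro h l hl hsum
    have := h l ((Finsupp.mem_supported' R l).1 hl)
      (by simpa [Finsupp.linearCombination_apply, Finsupp.sum_fintype] using hsum)
    exact Finsupp.ext (congrFun this)

theorem sum_smul_augmented_eq_zero_iff {R μ κ : Type*} [CommRing R] [Fintype κ]
    (A : Matrix μ κ R) (d : κ → R) :
    ∑ i, d i • (Sum.elim (fun k => A k i) (fun _ : Unit => 1) : μ ⊕ Unit → R) = 0 ↔
      A *ᵥ d = 0 ∧ ∑ i, d i = 0 := by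
  simp [funext_iff, Finset.sum_apply, mulVec, dotProduct, mul_comm]

theorem linearIndepOn_augmented_iff {R μ κ : Type*} [CommRing R] [Fintype κ]
    (A : Matrix μ κ R) (s : Set κ) :
    LinearIndepOn R (fun i => (Sum.elim (fun k => A k i) (fun _ : Unit => 1) : μ ⊕ Unit → R)) s ↔
      ∀ d : κ → R, (∀ i ∉ s, d i = 0) → A *ᵥ d = 0 → ∑ i, d i = 0 → d = 0 := by
  simp only [linearIndepOn_iff_of_fintype, sum_smul_augmented_eq_zero_iff, and_imp]

open Filter Topology in
theorem exists_pos_add_smul_nonneg {ι : Type*} [Finite ι] {x d : ι → ℝ} (hx : 0 ≤ x)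
    (hd : ∀ i, ¬ 0 < x i → 0 ≤ d i) : ∃ t : ℝ, 0 < t ∧ 0 ≤ x + t • d := by
  have : ∀ᶠ t in 𝓝[>] (0 : ℝ), ∀ i, 0 ≤ x i + t * d i := by
    refine eventually_all.2 fun i => ?_
    by_cases hi : 0 < x i
    · have : Tendsto (fun t => x i + t * d i) (𝓝[>] 0) (𝓝 (x i)) := by
        have hc : Continuous fun t => x i + t * d i := by fun_prop
        simpa using (hc.tendsto 0).mono_left nhdsWithin_le_nhds
      exact (this.eventually (eventually_gt_nhds hi)).mono fun t ht => ht.le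
    · filter_upwards [self_mem_nhdsWithin] with t (ht : 0 < t)
      exact add_nonneg (hx i) (mul_nonneg ht.le (hd i hi))
  obtain ⟨t, ht, ht₀⟩ := (this.and self_mem_nhdsWithin).exists
  exact ⟨t, ht₀, ht⟩

lemma sum_abs_eq_sum_of_nonneg {ι : Type*} [Fintype ι] {x : ι → ℝ} (hx : 0 ≤ x) :
    ∑ i, |x i| = ∑ i, x i :=
  Finset.sum_congr rfl fun i _ => abs_of_nonneg (hx i)

section LeastL1

variable {m n : ℕ} {A : Matrix (Fin m) (Fin n) ℝ} {b : Fin m → ℝ} {x : Fin n → ℝ}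

theorem sum_pos_of_uniqueLeastL1 (h : uniqueLeastL1 A b x) {d : Fin n → ℝ} (hd : A *ᵥ d = 0)
    (hdx : ∀ i, ¬ 0 < x i → 0 ≤ d i) (hd₀ : d ≠ 0) : 0 < ∑ i, d i := by
  obtain ⟨hAx, hx, hmin⟩ := h
  obtain ⟨t, ht, hw⟩ := exists_pos_add_smul_nonneg hx hdx
  have hlt := hmin (x + t • d) (by rw [mulVec_add, mulVec_smul, hAx, hd, smul_zero, add_zero])
    hw (by simpa [ht.ne'] using hd₀)
  rw [sum_abs_eq_sum_of_nonneg hx, sum_abs_eq_sum_of_nonneg hw] at hlt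
  simp only [Pi.add_apply, Pi.smul_apply, smul_eq_mul, Finset.sum_add_distrib,
    ← Finset.mul_sum] at hlt
  exact pos_of_mul_pos_right (by linarith) ht.le

theorem uniqueLeastL1_of_dual_certificate (hAx : A *ᵥ x = b) (hx : 0 ≤ x) {u : Fin m → ℝ}
    (hη₁ : ∀ i, 0 < x i → (Aᵀ *ᵥ u) i = 1) (hη₂ : ∀ i, ¬ 0 < x i → (Aᵀ *ᵥ u) i < 1)
    (hind : ∀ d, (∀ i, ¬ 0 < x i → d i = 0) → A *ᵥ d = 0 → ∑ i, d i = 0 → d = 0) :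
    uniqueLeastL1 A b x := by
  refine ⟨hAx, hx, fun w hw hw₀ hwx => ?_⟩
  set η := Aᵀ *ᵥ u
  have hx₀ : ∀ i, ¬ 0 < x i → x i = 0 := fun i hi => le_antisymm (not_lt.1 hi) (hx i)
  have hηx : η ⬝ᵥ x = ∑ i, x i := Finset.sum_congr rfl fun i _ => by
    by_cases hi : 0 < x i
    · rw [hη₁ i hi, one_mul]
    · rw [hx₀ i hi, mul_zero]
  have hgap : ∑ i, w i - ∑ i, x i = ∑ i, (1 - η i) * w i := by
    have hdual : η ⬝ᵥ x = η ⬝ᵥ w := by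
      simp only [η, mulVec_transpose, ← dotProduct_mulVec, hAx, hw]
    rw [← hηx, hdual]
    simp [dotProduct, sub_mul, Finset.sum_sub_distrib]
  have hterm : ∀ i, 0 ≤ (1 - η i) * w i := by
    refine fun i => mul_nonneg ?_ (hw₀ i)
    by_cases hi : 0 < x i
    · rw [hη₁ i hi, sub_self]
    · linarith [hη₂ i hi]
  rw [sum_abs_eq_sum_of_nonneg hx, sum_abs_eq_sum_of_nonneg hw₀]
  by_contra hle
  have hzero : ∀ i, (1 - η i) * w i = 0 := by
    refine congrFun ((Fintype.sum_eq_zero_iff_of_nonneg hterm).1 (le_antisymm ?_ ?_))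
    · linarith
    · exact Finset.sum_nonneg fun i _ => hterm i
  have hw₀' : ∀ i, ¬ 0 < x i → w i = 0 := fun i hi =>
    (mul_eq_zero.1 (hzero i)).resolve_left (by linarith [hη₂ i hi])
  refine hwx (sub_eq_zero.1 (hind (w - x) (fun i hi => ?_) ?_ ?_))
  · simp [hw₀' i hi, hx₀ i hi]
  · rw [mulVec_sub, hw, hAx, sub_self]
  · simp [Finset.sum_sub_distrib, hgap, hzero]

end LeastL1

theorem stmt_4 {m n : ℕ} (A : Matrix (Fin m) (Fin n) ℝ) (b : Fin m → ℝ)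
    (x : Fin n → ℝ) (hAx : A.mulVec x = b) (hx : 0 ≤ x) :
    uniqueLeastL1 A b x ↔
      ((∃ η : Fin n → ℝ, (∃ u : Fin m → ℝ, A.transpose.mulVec u = η) ∧
        (∀ i, 0 < x i → η i = 1) ∧ (∀ i, ¬ 0 < x i → η i < 1)) ∧
       LinearIndependent ℝ (fun j : {i : Fin n // 0 < x i} =>
        (Sum.elim (fun k : Fin m => A k j.1) (fun _ : Unit => (1 : ℝ)) :
          Fin m ⊕ Unit → ℝ))) := by
  constructor
  · intro h
    obtain ⟨u, hη₁, hη₂⟩ := exists_transpose_mulVec_eq_one_of_sum_pos A {i | 0 < x i}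
      fun d hd hdx hd₀ => sum_pos_of_uniqueLeastL1 h hd hdx hd₀
    refine ⟨⟨_, ⟨u, rfl⟩, hη₁, hη₂⟩, (linearIndepOn_augmented_iff A _).2 ?_⟩
    intro d hdx hd hsum
    by_contra hd₀
    exact (sum_pos_of_uniqueLeastL1 h hd (fun i hi => (hdx i hi).ge) hd₀).ne' hsum
  · rintro ⟨⟨_, ⟨u, rfl⟩, hη₁, hη₂⟩, hind⟩
    exact uniqueLeastL1_of_dual_certificate hAx hx hη₁ hη₂
      ((linearIndepOn_augmented_iff A _).1 hind)
end

section
/- Let A be a real m×n matrix, b ∈ ℝ^m, and let x be a nonnegative solution to Ax = b with J₊ = {i : xᵢ > 0}. Then x is the unique least ℓ1-norm nonnegative solution to the system Ax = b if and only if (i) there exists η ∈ R(Aᵀ) with ηᵢ = 1 for all i ∈ J₊ and ηᵢ < 1 for all i ∉ J₊, and (ii) the column submatrix A_{J₊} has full column rank. -/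
/-!
If `Av = 0`, `v ≠ 0` and `vᵢ ≥ 0` wherever `xᵢ = 0`, then `x + εv` is another nonnegative solution
for small `ε > 0`, so uniqueness of the minimiser forces `∑ vᵢ > 0`. Applied to `±v` for kernel
vectors supported on `J₊` this gives (ii). For (i), the homogenised system `(Aᵀu)ᵢ = t` on `J₊`,
`(Aᵀu)ᵢ < t` off `J₊`, `t > 0` is solvable by Motzkin's transposition theorem (Hahn–Banach
separation of an open orthant from a subspace, plus Lagrange multipliers for the equations), since
its alternative is precisely such a `v` with `∑ vᵢ ≤ 0`. Conversely, `η = Aᵀu` gives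
`∑ wᵢ ≥ ηᵀw = uᵀb = ηᵀx = ∑ xᵢ` for every nonnegative solution `w`, with equality only if `w`
vanishes off `J₊`, and then `w = x` by (ii).
-/

open Matrix

open Filter Topology

lemma eq_zero_of_forall_le_mul {a c : ℝ} (h : ∀ k : ℝ, c ≤ k * a) : a = 0 := by
  by_contra ha
  have := h ((c - 1) / a)
  rw [div_mul_cancel₀ _ ha] at this
  linarith

lemma nonneg_of_forall_sub_mul_lt {a b c : ℝ} (h : ∀ k : ℝ, 0 ≤ k → a - k * b < c) : 0 ≤ b := by
  by_contra! hb
  have := h ((a - c) / b) (div_nonneg_of_nonpos (by linarith [h 0 le_rfl]) hb.le)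
  rw [div_mul_cancel₀ _ hb.ne] at this
  linarith

theorem gordan_alternative {ι : Type*} [Fintype ι] (W : Submodule ℝ (ι → ℝ)) (p : ι → Prop) :
    (∃ z ∈ W, ∀ i, p i → z i < 0) ∨
      ∃ y : ι → ℝ, (∀ z ∈ W, y ⬝ᵥ z = 0) ∧ (∀ i, p i → 0 ≤ y i) ∧ ∃ i, p i ∧ y i ≠ 0 := by
  classical
  refine or_iff_not_imp_left.2 fun hsol => ?_
  let s : Set (ι → ℝ) := ⋂ i, ⋂ (_ : p i), {z | z i < 0}
  have hs : ∀ z, z ∈ s ↔ ∀ i, p i → z i < 0 := fun z => by simp [s]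
  have hs_open : IsOpen s := isOpen_iInter_of_finite fun i => isOpen_iInter_of_finite fun _ =>
    isOpen_lt (continuous_apply i) continuous_const
  have hs_conv : Convex ℝ s := convex_iInter fun i => convex_iInter fun _ =>
    convex_halfSpace_lt (LinearMap.proj i : (ι → ℝ) →ₗ[ℝ] ℝ).isLinear 0
  have hdisj : Disjoint s W := Set.disjoint_left.2 fun z hz hzW => hsol ⟨z, hzW, (hs z).1 hz⟩
  obtain ⟨f, c, hfs, hfW⟩ := geometric_hahn_banach_open hs_conv hs_open W.convex hdisj
  obtain ⟨y, hy⟩ := (dotProductEquiv ℝ ι).surjective (f : Module.Dual ℝ (ι → ℝ))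
  have hf : ∀ z, f z = y ⬝ᵥ z := fun z => (LinearMap.congr_fun hy z).symm
  have hc : c ≤ 0 := by simpa using hfW 0 W.zero_mem
  let z₀ : ι → ℝ := fun i => if p i then -1 else 0
  have hz₀ : z₀ ∈ s := (hs z₀).2 fun i hi => by simp [z₀, hi]
  refine ⟨y, fun z hz => ?_, fun i hi => ?_, ?_⟩
  · exact eq_zero_of_forall_le_mul fun k => by simpa [hf] using hfW (k • z) (W.smul_mem k hz)
  · refine nonneg_of_forall_sub_mul_lt (a := y ⬝ᵥ z₀) (c := c) fun k hk => ?_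
    have hmem : z₀ - k • Pi.single i 1 ∈ s := (hs _).2 fun j hj => by
      by_cases hji : j = i
      · subst hji; simp [z₀, hj]; linarith
      · simp [z₀, hj, hji]
    simpa [hf, dotProduct_sub] using hfs _ hmem
  · by_contra! hall
    have : y ⬝ᵥ z₀ = 0 := Finset.sum_eq_zero fun i _ => by
      by_cases hi : p i <;> simp [z₀, hi, hall]
    linarith [hfs z₀ hz₀, hf z₀]

theorem exists_orthogonal_range_of_orthogonal_constrained {V ι : Type*} [AddCommGroup V]
    [Module ℝ V] [Fintype ι] (Φ : V →ₗ[ℝ] ι → ℝ) (p : ι → Prop) {y : ι → ℝ}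
    (hy : ∀ d, (∀ i, ¬ p i → Φ d i = 0) → y ⬝ᵥ Φ d = 0) :
    ∃ y' : ι → ℝ, (∀ d, y' ⬝ᵥ Φ d = 0) ∧ ∀ i, p i → y' i = y i := by
  classical
  let G : V →ₗ[ℝ] ι → ℝ := (LinearMap.pi fun i => if p i then 0 else LinearMap.proj i) ∘ₗ Φ
  have hG : ∀ d i, G d i = if p i then 0 else Φ d i := fun d i => by
    by_cases hi : p i <;> simp [G, hi]
  obtain ⟨h, hh⟩ : ∃ h, G.dualMap h = dotProductEquiv ℝ ι y ∘ₗ Φ := by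
    rw [← LinearMap.mem_range, LinearMap.range_dualMap_eq_dualAnnihilator_ker,
      Submodule.mem_dualAnnihilator]
    intro d hd
    exact hy d fun i hi => by simpa [hG, hi] using congrFun (LinearMap.mem_ker.1 hd) i
  obtain ⟨w, rfl⟩ := (dotProductEquiv ℝ ι).surjective h
  refine ⟨fun i => y i - if p i then 0 else w i, fun d => ?_, fun i hi => by simp [hi]⟩
  have hwy : w ⬝ᵥ G d = y ⬝ᵥ Φ d := LinearMap.congr_fun hh d
  calc (fun i => y i - if p i then 0 else w i) ⬝ᵥ Φ d = y ⬝ᵥ Φ d - w ⬝ᵥ G d := by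
        simp only [dotProduct, hG, ← Finset.sum_sub_distrib]
        exact Finset.sum_congr rfl fun i _ => by split_ifs <;> ring
    _ = 0 := by rw [hwy, sub_self]

theorem motzkin_alternative {V ι : Type*} [AddCommGroup V] [Module ℝ V] [Fintype ι]
    (Φ : V →ₗ[ℝ] ι → ℝ) (p : ι → Prop) :
    (∃ d, (∀ i, ¬ p i → Φ d i = 0) ∧ ∀ i, p i → Φ d i < 0) ∨
      ∃ y : ι → ℝ, (∀ d, y ⬝ᵥ Φ d = 0) ∧ (∀ i, p i → 0 ≤ y i) ∧ ∃ i, p i ∧ y i ≠ 0 := by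
  let D : Submodule ℝ V := ⨅ (i) (_ : ¬ p i), LinearMap.ker (LinearMap.proj i ∘ₗ Φ)
  have hD : ∀ d, d ∈ D ↔ ∀ i, ¬ p i → Φ d i = 0 := fun d => by simp [D]
  rcases gordan_alternative (D.map Φ) p with ⟨_, ⟨d, hd, rfl⟩, hneg⟩ | ⟨y, hy, hyp, i, hi, hyi⟩
  · exact .inl ⟨d, (hD d).1 hd, hneg⟩
  · obtain ⟨y', hy', hy'p⟩ := exists_orthogonal_range_of_orthogonal_constrained Φ p
      fun d hd => hy _ ⟨d, (hD d).2 hd, rfl⟩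
    exact .inr ⟨y', hy', fun i hi => hy'p i hi ▸ hyp i hi, i, hi, hy'p i hi ▸ hyi⟩

lemma Matrix.mulVec_eq_sum_of_support {R m n : Type*} [CommRing R] [Fintype n]
    (A : Matrix m n R) {p : n → Prop} [DecidablePred p] {v : n → R} (hv : ∀ i, ¬ p i → v i = 0) :
    A *ᵥ v = ∑ j : {i // p i}, v j • fun k => A k j := by
  ext k
  simp only [mulVec, dotProduct, Finset.sum_apply, Pi.smul_apply, smul_eq_mul]
  have hN : ∑ i : {i // ¬ p i}, A k i * v i = 0 :=
    Finset.sum_eq_zero fun i _ => by rw [hv i i.2, mul_zero]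
  rw [← Fintype.sum_subtype_add_sum_subtype p, hN, add_zero]
  simp only [mul_comm]

theorem Matrix.linearIndependent_cols_subtype_iff {R m n : Type*} [CommRing R] [Fintype n]
    (A : Matrix m n R) (p : n → Prop) :
    LinearIndependent R (fun j : {i // p i} => fun k => A k j.1) ↔
      ∀ v : n → R, (∀ i, ¬ p i → v i = 0) → A *ᵥ v = 0 → v = 0 := by
  classical
  rw [Fintype.linearIndependent_iff]
  constructor
  · intro h v hv hAv
    funext i
    by_cases hi : p i
    · exact h (fun j => v j) (by rw [← A.mulVec_eq_sum_of_support hv, hAv]) ⟨i, hi⟩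
    · exact hv i hi
  · intro h g hg j
    let v : n → R := fun i => if hi : p i then g ⟨i, hi⟩ else 0
    have hv : ∀ i, ¬ p i → v i = 0 := fun i hi => dif_neg hi
    have := h v hv <| (A.mulVec_eq_sum_of_support hv).trans <|
      (Finset.sum_congr rfl fun j _ => by simp [v, j.2]).trans hg
    simpa [v, j.2] using congrFun this j

lemma exists_pos_nonneg_add_smul {ι : Type*} [Finite ι] {x v : ι → ℝ} (hx : 0 ≤ x)
    (hv : ∀ i, ¬ 0 < x i → 0 ≤ v i) : ∃ ε : ℝ, 0 < ε ∧ 0 ≤ x + ε • v := by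
  have : ∀ᶠ ε in 𝓝[>] (0 : ℝ), ∀ i, 0 ≤ x i + ε * v i := by
    refine eventually_all.2 fun i => ?_
    by_cases hi : 0 < x i
    · have : Tendsto (fun ε => x i + ε * v i) (𝓝[>] 0) (𝓝 (x i)) :=
        ((continuous_const.add (continuous_id.mul continuous_const)).tendsto' 0 (x i)
          (by simp)).mono_left nhdsWithin_le_nhds
      exact (this.eventually (lt_mem_nhds hi)).mono fun _ h => h.le
    · filter_upwards [self_mem_nhdsWithin] with ε hε
      exact add_nonneg (hx i) (mul_nonneg (le_of_lt hε) (hv i hi))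
  obtain ⟨ε, hε, hε'⟩ := (this.and self_mem_nhdsWithin).exists
  exact ⟨ε, hε', hε⟩

/-- `(u, t) ↦ (Aᵀu - t𝟙, -t)`, with `-t` in the coordinate `none`: the homogenisation of (i), whose
solutions with `-t < 0` rescale to `η = Aᵀ(u / t)`. -/
def dualSlack {m n : Type*} [Fintype m] (A : Matrix m n ℝ) : (m → ℝ) × ℝ →ₗ[ℝ] Option n → ℝ where
  toFun d o := o.elim (-d.2) fun i => (Aᵀ *ᵥ d.1) i - d.2
  map_add' d d' := by
    funext o
    cases o <;> simp [mulVec_add] <;> ring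
  map_smul' r d := by
    funext o
    cases o <;> simp [mulVec_smul, mul_sub]

lemma dotProduct_dualSlack {m n : Type*} [Fintype m] [Fintype n] (A : Matrix m n ℝ)
    (y : Option n → ℝ) (u : m → ℝ) (t : ℝ) :
    y ⬝ᵥ dualSlack A (u, t) = (A *ᵥ fun i => y (some i)) ⬝ᵥ u - t * (y none + ∑ i, y (some i)) := by
  rw [← vecMul_transpose, ← dotProduct_mulVec]
  simp only [dotProduct, Fintype.sum_option, dualSlack, LinearMap.coe_mk, AddHom.coe_mk,
    Option.elim_none, Option.elim_some, mul_sub, Finset.sum_sub_distrib, ← Finset.sum_mul]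
  ring

namespace uniqueLeastL1

variable {m n : ℕ} {A : Matrix (Fin m) (Fin n) ℝ} {b : Fin m → ℝ} {x : Fin n → ℝ}

lemma sum_pos_of_mulVec_eq_zero (h : uniqueLeastL1 A b x) {v : Fin n → ℝ} (hAv : A *ᵥ v = 0)
    (hv : ∀ i, ¬ 0 < x i → 0 ≤ v i) (hv0 : v ≠ 0) : 0 < ∑ i, v i := by
  obtain ⟨hAx, hx, hmin⟩ := h
  obtain ⟨ε, hε, hw⟩ := exists_pos_nonneg_add_smul hx hv
  have hlt := hmin (x + ε • v) (by rw [mulVec_add, mulVec_smul, hAv, smul_zero, add_zero, hAx])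
    hw (by simpa [hε.ne'] using hv0)
  rw [Finset.sum_congr rfl fun i _ => abs_of_nonneg (hx i),
    Finset.sum_congr rfl fun i _ => abs_of_nonneg (hw i)] at hlt
  simp only [Pi.add_apply, Pi.smul_apply, smul_eq_mul, Finset.sum_add_distrib,
    ← Finset.mul_sum] at hlt
  exact pos_of_mul_pos_right (by linarith) hε.le

lemma linearIndependent (h : uniqueLeastL1 A b x) :
    LinearIndependent ℝ (fun j : {i // 0 < x i} => fun k => A k j.1) := by
  refine (A.linearIndependent_cols_subtype_iff _).2 fun v hv hAv => ?_
  by_contra hv0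
  have hpos := h.sum_pos_of_mulVec_eq_zero hAv (fun i hi => (hv i hi).ge) hv0
  have hneg := h.sum_pos_of_mulVec_eq_zero (v := -v) (by rw [mulVec_neg, hAv, neg_zero])
    (fun i hi => by simp [hv i hi]) (neg_ne_zero.2 hv0)
  simp only [Pi.neg_apply, Finset.sum_neg_distrib] at hneg
  linarith

lemma exists_dual_certificate (h : uniqueLeastL1 A b x) :
    ∃ η : Fin n → ℝ, (∃ u, Aᵀ *ᵥ u = η) ∧ (∀ i, 0 < x i → η i = 1) ∧
      (∀ i, ¬ 0 < x i → η i < 1) := by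
  rcases motzkin_alternative (dualSlack A) (fun o => o.elim True fun i => ¬ 0 < x i) with
    ⟨⟨u, t⟩, hJ, hN⟩ | ⟨y, hy, hyN, o, -, hyo⟩
  · have ht : 0 < t := neg_neg_iff_pos.1 (hN none trivial)
    refine ⟨Aᵀ *ᵥ (t⁻¹ • u), ⟨_, rfl⟩, fun i hi => ?_, fun i hi => ?_⟩
    · rw [mulVec_smul, Pi.smul_apply, smul_eq_mul, sub_eq_zero.1 (hJ (some i) (not_not.2 hi)),
        inv_mul_cancel₀ ht.ne']
    · rw [mulVec_smul, Pi.smul_apply, smul_eq_mul, inv_mul_lt_one₀ ht, ← sub_neg]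
      exact hN (some i) hi
  · let v : Fin n → ℝ := fun i => y (some i)
    have hAv : A *ᵥ v = 0 := by
      have := hy (A *ᵥ v, 0)
      rw [dotProduct_dualSlack, zero_mul, sub_zero] at this
      exact dotProduct_self_eq_zero.1 this
    have hsum : y none + ∑ i, v i = 0 := by
      have := hy (0, 1)
      rwa [dotProduct_dualSlack, dotProduct_zero, one_mul, zero_sub, neg_eq_zero] at this
    have hv0 : v ≠ 0 := by
      rintro hv
      cases o with
      | none => exact hyo (by simpa [hv] using hsum)
      | some i => exact hyo (congrFun hv i)
    linarith [h.sum_pos_of_mulVec_eq_zero hAv (fun i hi => hyN (some i) hi) hv0, hyN none trivial]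

end uniqueLeastL1

theorem uniqueLeastL1_of_dual_certificate_s6 {m n : ℕ} {A : Matrix (Fin m) (Fin n) ℝ}
    {b : Fin m → ℝ} {x : Fin n → ℝ} (hAx : A *ᵥ x = b) (hx : 0 ≤ x) {η : Fin n → ℝ}
    (hηA : ∃ u, Aᵀ *ᵥ u = η) (hηJ : ∀ i, 0 < x i → η i = 1) (hηN : ∀ i, ¬ 0 < x i → η i < 1)
    (hli : LinearIndependent ℝ (fun j : {i // 0 < x i} => fun k => A k j.1)) :
    uniqueLeastL1 A b x := by
  obtain ⟨u, hu⟩ := hηA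
  refine ⟨hAx, hx, fun w hAw hw hwx => ?_⟩
  have hxN : ∀ i, ¬ 0 < x i → x i = 0 := fun i hi => le_antisymm (not_lt.1 hi) (hx i)
  have hη_eq : ∀ z, η ⬝ᵥ z = u ⬝ᵥ (A *ᵥ z) := fun z => by
    rw [← hu, mulVec_transpose, dotProduct_mulVec]
  have hηx : η ⬝ᵥ x = ∑ i, x i := Finset.sum_congr rfl fun i _ => by
    by_cases hi : 0 < x i
    · rw [hηJ i hi, one_mul]
    · rw [hxN i hi, mul_zero]
  have hηw : η ⬝ᵥ w = ∑ i, x i := by rw [hη_eq, hAw, ← hAx, ← hη_eq, hηx]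
  have hslack : ∀ i, 0 ≤ (1 - η i) * w i := fun i => by
    by_cases hi : 0 < x i
    · rw [hηJ i hi, sub_self, zero_mul]
    · exact mul_nonneg (sub_nonneg.2 (hηN i hi).le) (hw i)
  have hgap : ∑ i, (1 - η i) * w i = ∑ i, w i - ∑ i, x i := by
    simp only [sub_mul, one_mul, Finset.sum_sub_distrib, ← hηw, dotProduct]
  rw [Finset.sum_congr rfl fun i _ => abs_of_nonneg (hx i),
    Finset.sum_congr rfl fun i _ => abs_of_nonneg (hw i)]
  by_contra! hle
  have hzero : ∀ i, (1 - η i) * w i = 0 := fun i =>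
    (Finset.sum_eq_zero_iff_of_nonneg fun i _ => hslack i).1
      (le_antisymm (by linarith) (Finset.sum_nonneg fun i _ => hslack i)) i (Finset.mem_univ i)
  have hwN : ∀ i, ¬ 0 < x i → w i = 0 := fun i hi =>
    (mul_eq_zero.1 (hzero i)).resolve_left (sub_ne_zero.2 (hηN i hi).ne')
  exact hwx (sub_eq_zero.1 ((A.linearIndependent_cols_subtype_iff _).1 hli (w - x)
    (fun i hi => by simp [hwN i hi, hxN i hi]) (by rw [mulVec_sub, hAw, hAx, sub_self])))

theorem stmt_6 {m n : ℕ} (A : Matrix (Fin m) (Fin n) ℝ) (b : Fin m → ℝ)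
    (x : Fin n → ℝ) (hAx : A.mulVec x = b) (hx : 0 ≤ x) :
    uniqueLeastL1 A b x ↔
      ((∃ η : Fin n → ℝ, (∃ u : Fin m → ℝ, A.transpose.mulVec u = η) ∧
        (∀ i, 0 < x i → η i = 1) ∧ (∀ i, ¬ 0 < x i → η i < 1)) ∧
       LinearIndependent ℝ (fun j : {i : Fin n // 0 < x i} =>
        fun k : Fin m => A k j.1)) :=
  ⟨fun h => ⟨h.exists_dual_certificate, h.linearIndependent⟩,
    fun ⟨⟨_, hηA, hηJ, hηN⟩, hli⟩ => uniqueLeastL1_of_dual_certificate_s6 hAx hx hηA hηJ hηN hli⟩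
end

section
/- Let A be a real m×n matrix and b ∈ ℝ^m. If x is a sparsest nonnegative solution to the system Ax = b, then the matrix M obtained by appending the all-ones row e_{J₊}ᵀ below the column submatrix A_{J₊} has full column rank, where J₊ = {i : xᵢ > 0}. -/
/-!
A dependence `z` among the columns of `A` on `J₊`, extended by a row of ones, satisfies `A z = 0`
and `∑ zᵢ = 0`, so if `z ≠ 0` it has a positive entry. Moving from `x` along `-z` until the first
coordinate reaches zero (the ratio test `t = min {xᵢ / zᵢ | zᵢ > 0}`) gives a nonnegative solution
with strictly smaller support, contradicting sparsity.
-/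

open Matrix Function

section

variable {R M ι : Type*} [Fintype ι]

theorem linearIndepOn_of_forall_sum_smul_eq_zero [Ring R] [AddCommGroup M] [Module R M]
    {v : ι → M} {s : Set ι}
    (h : ∀ z : ι → R, support z ⊆ s → ∑ i, z i • v i = 0 → z = 0) : LinearIndepOn R v s := by
  refine linearIndepOn_iff.mpr fun l hl hlv => Finsupp.coe_eq_zero.mp (h l ?_ ?_)
  · exact (Finsupp.fun_support_eq l).trans_subset ((Finsupp.mem_supported R l).mp hl)
  · rwa [Finsupp.linearCombination_apply,
      Finsupp.sum_fintype _ _ fun i => zero_smul R (v i)] at hlv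

theorem sum_smul_sumElim_eq_zero_iff [CommSemiring R] {κ : Type*} {A : Matrix κ ι R}
    {z : ι → R} :
    ∑ i, z i • (Sum.elim (fun k => A k i) (fun _ : Unit => (1 : R)) : κ ⊕ Unit → R) = 0 ↔
      A *ᵥ z = 0 ∧ ∑ i, z i = 0 := by
  simp [funext_iff, Sum.forall, mulVec, dotProduct, mul_comm]

end

theorem exists_nonneg_sub_smul_support_ssubset {ι : Type*} [Finite ι] {x z : ι → ℝ}
    (hx : 0 ≤ x) (hzx : support z ⊆ support x) (hz : ∃ i, 0 < z i) :
    ∃ t : ℝ, 0 ≤ x - t • z ∧ support (x - t • z) ⊂ support x := by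
  obtain ⟨j, hzj, hmin⟩ :=
    Set.exists_min_image {i | 0 < z i} (fun i => x i / z i) (Set.toFinite _) hz
  have hzj : 0 < z j := hzj
  have hxj : 0 < x j := (hx j).lt_of_ne' (hzx hzj.ne')
  refine ⟨x j / z j, fun i => ?_, ?_⟩
  · simp only [Pi.zero_apply, Pi.sub_apply, Pi.smul_apply, smul_eq_mul, sub_nonneg]
    rcases lt_or_ge 0 (z i) with hzi | hzi
    · exact (le_div_iff₀ hzi).mp (hmin i hzi)
    · exact (mul_nonpos_of_nonneg_of_nonpos (by positivity) hzi).trans (hx i)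
  · have hsub : support (x - (x j / z j) • z) ⊆ support x :=
      (support_sub _ _).trans
        (Set.union_subset subset_rfl ((support_const_smul_subset _ _).trans hzx))
    refine (Set.ssubset_iff_of_subset hsub).mpr ⟨j, hxj.ne', ?_⟩
    simp [hzj.ne']

def IsSparsestNonnegSolution {κ ι : Type*} [Fintype ι] (A : Matrix κ ι ℝ) (b : κ → ℝ)
    (x : ι → ℝ) : Prop :=
  A *ᵥ x = b ∧ 0 ≤ x ∧ ∀ w, A *ᵥ w = b → 0 ≤ w → (support x).ncard ≤ (support w).ncard

theorem IsSparsestNonnegSolution.nonpos_of_mulVec_eq_zero {κ ι : Type*} [Fintype ι]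
    {A : Matrix κ ι ℝ} {b : κ → ℝ} {x z : ι → ℝ} (h : IsSparsestNonnegSolution A b x)
    (hzx : support z ⊆ support x) (hAz : A *ᵥ z = 0) : z ≤ 0 := by
  obtain ⟨hAx, hx, hsparsest⟩ := h
  by_contra hz
  obtain ⟨t, hw, hlt⟩ :=
    exists_nonneg_sub_smul_support_ssubset hx hzx (by simpa [Pi.le_def] using hz)
  have hAw : A *ᵥ (x - t • z) = b := by
    rw [mulVec_sub, mulVec_smul, hAz, smul_zero, sub_zero, hAx]
  exact (Set.ncard_lt_ncard hlt).not_ge (hsparsest _ hAw hw)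

theorem stmt_8 {m n : ℕ} (A : Matrix (Fin m) (Fin n) ℝ) (b : Fin m → ℝ)
    (x : Fin n → ℝ) (hAx : A.mulVec x = b) (hx : 0 ≤ x)
    (hsparsest : ∀ w : Fin n → ℝ, A.mulVec w = b → 0 ≤ w →
      {i : Fin n | x i ≠ 0}.ncard ≤ {i : Fin n | w i ≠ 0}.ncard) :
    LinearIndependent ℝ (fun j : {i : Fin n // 0 < x i} =>
      (Sum.elim (fun k : Fin m => A k j.1) (fun _ : Unit => (1 : ℝ)) :
        Fin m ⊕ Unit → ℝ)) := by
  have hsol : IsSparsestNonnegSolution A b x := ⟨hAx, hx, hsparsest⟩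
  refine linearIndepOn_of_forall_sum_smul_eq_zero (s := {i | 0 < x i})
    (v := fun i => Sum.elim (fun k => A k i) fun _ => 1) fun z hz hsum => ?_
  obtain ⟨hAz, hz_sum⟩ := sum_smul_sumElim_eq_zero_iff.mp hsum
  have hz_nonpos : z ≤ 0 := hsol.nonpos_of_mulVec_eq_zero (hz.trans fun _ hi => hi.ne') hAz
  exact funext fun i =>
    (Finset.sum_eq_zero_iff_of_nonpos fun i _ => hz_nonpos i).mp hz_sum i (Finset.mem_univ i)
end

section
/- Let A be a real m×n matrix and b ∈ ℝ^m. There exists at most one sparsest nonnegative solution x to the system Ax = b at which the RSP of Aᵀ holds, i.e., if x and x' are both sparsest nonnegative solutions and the RSP of Aᵀ holds at both x and x', then x = x'. -/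
open Matrix

/-- `x` is a sparsest nonnegative solution to `A x = b`. -/
def sparsestNonnegSol {m n : ℕ} (A : Matrix (Fin m) (Fin n) ℝ) (b : Fin m → ℝ)
    (x : Fin n → ℝ) : Prop :=
  A.mulVec x = b ∧ 0 ≤ x ∧
    ∀ w : Fin n → ℝ, A.mulVec w = b → 0 ≤ w →
      {i : Fin n | x i ≠ 0}.ncard ≤ {i : Fin n | w i ≠ 0}.ncard

/-- The RSP of `Aᵀ` holds at `x`. -/
def RSPat {m n : ℕ} (A : Matrix (Fin m) (Fin n) ℝ) (x : Fin n → ℝ) : Prop :=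
  ∃ η : Fin n → ℝ, (∃ u : Fin m → ℝ, A.transpose.mulVec u = η) ∧
    (∀ i, 0 < x i → η i = 1) ∧ (∀ i, x i = 0 → η i < 1)

/-!
The RSP at `x` is a dual certificate `u` for the linear program `min ∑ wᵢ` over the nonnegative
solutions `w` of `A w = b`: with reduced costs `c = 1 - Aᵀ u ≥ 0`, which vanish on the support of
`x` and are positive off it, every such `w` satisfies `∑ w - ∑ x = c ⬝ w ≥ 0`. So two solutions
with the RSP have the same sum, and each is supported in the support of the other.
A sparsest nonnegative solution `x` is the only solution of `A w = b` supported in its support: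
otherwise moving from `x` along the difference until a coordinate vanishes gives a sparser one.
-/

open Function

theorem exists_add_smul_nonneg_support_ssubset {ι : Type*} [Fintype ι] {x d : ι → ℝ}
    (hx : 0 ≤ x) (hd : d ≠ 0) (hsupp : support d ⊆ support x) :
    ∃ t : ℝ, 0 ≤ x + t • d ∧ support (x + t • d) ⊂ support x := by
  obtain ⟨j, hj⟩ := Function.ne_iff.mp hd
  obtain ⟨i₀, hi₀, hmin⟩ := (Finset.univ.filter fun i => d i ≠ 0).exists_min_image
    (fun i => x i / |d i|) ⟨j, by simpa using hj⟩
  have hdi₀ : d i₀ ≠ 0 := (Finset.mem_filter.mp hi₀).2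
  set t := -(x i₀ / d i₀)
  -- `i₀` is the first coordinate to vanish along the line `x + t • d`.
  have hbound : ∀ i, |t * d i| ≤ x i := by
    intro i
    by_cases hdi : d i = 0
    · simpa [hdi] using hx i
    have hpos : 0 < |d i| := abs_pos.mpr hdi
    calc |t * d i| = x i₀ / |d i₀| * |d i| := by
          rw [abs_mul, abs_neg, abs_div, abs_of_nonneg (hx i₀)]
      _ ≤ x i / |d i| * |d i| :=
          mul_le_mul_of_nonneg_right (hmin i (by simpa using hdi)) hpos.le
      _ = x i := div_mul_cancel₀ _ hpos.ne'
  refine ⟨t, fun i => ?_, ?_⟩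
  · have := (abs_le.mp (hbound i)).1
    simp only [Pi.zero_apply, Pi.add_apply, Pi.smul_apply, smul_eq_mul]
    linarith
  have hsub : support (x + t • d) ⊆ support x :=
    (support_add x (t • d)).trans
      (Set.union_subset le_rfl ((support_smul_subset_right _ d).trans hsupp))
  refine (Set.ssubset_iff_of_subset hsub).mpr ⟨i₀, hsupp hdi₀, ?_⟩
  simp only [mem_support, Pi.add_apply, Pi.smul_apply, smul_eq_mul, not_not, t]
  field_simp
  ring

theorem sparsestNonnegSol.eq_of_support_subset {m n : ℕ} {A : Matrix (Fin m) (Fin n) ℝ}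
    {b : Fin m → ℝ} {x w : Fin n → ℝ} (hx : sparsestNonnegSol A b x) (hw : A *ᵥ w = b)
    (hsupp : support w ⊆ support x) : w = x := by
  obtain ⟨hxb, hx0, hxmin⟩ := hx
  by_contra hne
  have hdsupp : support (w - x) ⊆ support x := fun i hi => by
    by_contra hxi
    exact hi (by simp_all)
  obtain ⟨t, hy0, hyss⟩ :=
    exists_add_smul_nonneg_support_ssubset hx0 (sub_ne_zero.mpr hne) hdsupp
  have hyb : A *ᵥ (x + t • (w - x)) = b := by
    rw [mulVec_add, mulVec_smul, mulVec_sub, hw, hxb, sub_self, smul_zero, add_zero]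
  exact (hxmin _ hyb hy0).not_gt (Set.ncard_lt_ncard hyss)

theorem sum_sub_sum_eq_dotProduct_of_mem_range_transpose {m n : Type*} [Fintype m] [Fintype n]
    {A : Matrix m n ℝ} {x w η : n → ℝ} (hη : ∃ u, Aᵀ *ᵥ u = η)
    (hη_one : ∀ i, 0 < x i → η i = 1) (hx : 0 ≤ x) (hw : A *ᵥ w = A *ᵥ x) :
    ∑ i, w i - ∑ i, x i = (1 - η) ⬝ᵥ w := by
  obtain ⟨u, rfl⟩ := hη
  have hηw : (Aᵀ *ᵥ u) ⬝ᵥ w = (Aᵀ *ᵥ u) ⬝ᵥ x := by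
    simp only [mulVec_transpose, ← dotProduct_mulVec, hw]
  have hηx : (Aᵀ *ᵥ u) ⬝ᵥ x = ∑ i, x i := Finset.sum_congr rfl fun i _ => by
    rcases (hx i).lt_or_eq with h | h
    · rw [hη_one i h, one_mul]
    · rw [← h, Pi.zero_apply, mul_zero]
  rw [sub_dotProduct, ← hηx, ← hηw]
  simp [dotProduct]

theorem RSPat.exists_reducedCost {m n : ℕ} {A : Matrix (Fin m) (Fin n) ℝ} {x : Fin n → ℝ}
    (h : RSPat A x) (hx : 0 ≤ x) :
    ∃ c : Fin n → ℝ, 0 ≤ c ∧ (∀ i, x i = 0 → 0 < c i) ∧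
      ∀ w, A *ᵥ w = A *ᵥ x → ∑ i, w i - ∑ i, x i = c ⬝ᵥ w := by
  obtain ⟨η, hη, hη_one, hη_lt⟩ := h
  refine ⟨1 - η, fun i => ?_, fun i hi => sub_pos.mpr (hη_lt i hi), fun w hw =>
    sum_sub_sum_eq_dotProduct_of_mem_range_transpose hη hη_one hx hw⟩
  rcases (hx i).lt_or_eq with h | h
  · simp [hη_one i h]
  · simpa using (hη_lt i h.symm).le

theorem RSPat.sum_le_sum {m n : ℕ} {A : Matrix (Fin m) (Fin n) ℝ} {x w : Fin n → ℝ}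
    (h : RSPat A x) (hx : 0 ≤ x) (hw0 : 0 ≤ w) (hw : A *ᵥ w = A *ᵥ x) :
    ∑ i, x i ≤ ∑ i, w i := by
  obtain ⟨c, hc, -, hcw⟩ := h.exists_reducedCost hx
  have := hcw w hw
  have : 0 ≤ c ⬝ᵥ w := Finset.sum_nonneg fun i _ => mul_nonneg (hc i) (hw0 i)
  linarith

theorem RSPat.support_subset {m n : ℕ} {A : Matrix (Fin m) (Fin n) ℝ} {x w : Fin n → ℝ}
    (h : RSPat A x) (hx : 0 ≤ x) (hw0 : 0 ≤ w) (hw : A *ᵥ w = A *ᵥ x)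
    (hsum : ∑ i, w i ≤ ∑ i, x i) : support w ⊆ support x := by
  obtain ⟨c, hc, hc_pos, hcw⟩ := h.exists_reducedCost hx
  have hterm : ∀ i ∈ Finset.univ, 0 ≤ c i * w i := fun i _ => mul_nonneg (hc i) (hw0 i)
  have hzero : c ⬝ᵥ w = 0 :=
    le_antisymm (by linarith [hcw w hw]) (Finset.sum_nonneg hterm)
  intro i hwi hxi
  have := (Finset.sum_eq_zero_iff_of_nonneg hterm).mp hzero i (Finset.mem_univ i)
  exact hwi ((mul_eq_zero.mp this).resolve_left (hc_pos i hxi).ne')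

theorem stmt_10 {m n : ℕ} (A : Matrix (Fin m) (Fin n) ℝ) (b : Fin m → ℝ)
    (x x' : Fin n → ℝ)
    (hx : sparsestNonnegSol A b x) (hx' : sparsestNonnegSol A b x')
    (hrsp : RSPat A x) (hrsp' : RSPat A x') :
    x = x' := by
  have hx0 := hx.2.1
  have hx'0 := hx'.2.1
  have hA : A *ᵥ x' = A *ᵥ x := hx'.1.trans hx.1.symm
  have hsum : ∑ i, x' i ≤ ∑ i, x i := hrsp'.sum_le_sum hx'0 hx0 hA.symm
  exact (hx.eq_of_support_subset hx'.1 (hrsp.support_subset hx0 hx'0 hA hsum)).symm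
end

section
/- Let A be a real m×n matrix with m < n. If Aᵀ satisfies the range space property of order K, then any K columns of A are linearly independent; in particular K < Spark(A), the smallest number of linearly dependent columns of A. -/
open Matrix

/-- `Aᵀ` satisfies the range space property of order `K`: for every subset `S`
of the column indices with `|S| ≤ K` there is `η ∈ R(Aᵀ)` with `η i = 1` for
`i ∈ S` and `η i < 1` for `i ∉ S`. -/
def RSPorder {m n : ℕ} (A : Matrix (Fin m) (Fin n) ℝ) (K : ℕ) : Prop :=
  ∀ S : Finset (Fin n), S.card ≤ K →
    ∃ η : Fin n → ℝ, (∃ u : Fin m → ℝ, A.transpose.mulVec u = η) ∧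
      (∀ i ∈ S, η i = 1) ∧ (∀ i ∉ S, η i < 1)

/-- `Spark A` is the smallest number of columns of `A` that are linearly dependent. -/
noncomputable def spark {m n : ℕ} (A : Matrix (Fin m) (Fin n) ℝ) : ℕ :=
  sInf {k : ℕ | ∃ S : Finset (Fin n), S.card = k ∧
    ¬ LinearIndependent ℝ (fun j : {i : Fin n // i ∈ S} => fun i : Fin m => A i j.1)}

/-!
A linear dependence `∑ g j • aⱼ = 0` among columns of `A` is orthogonal to every
vector `Aᵀ u` of the range space. For `j₀ ∈ S`, subtracting the RSP vector of
`S.erase j₀` from that of `S` gives a range vector vanishing on `S \ {j₀}` and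
positive at `j₀`, so the dependence has `g j₀ = 0`. For `m < n` all `n` columns
are dependent, so the set defining the spark is nonempty (rather than having the
junk infimum `sInf ∅ = 0`) and every element exceeds `K`.
-/

theorem sum_mul_mulVec_transpose_eq_zero {R ι m n : Type*} [CommRing R] [Fintype ι]
    [Fintype m] (A : Matrix m n R) (f : ι → n) (g : ι → R)
    (hg : ∑ j, g j • (fun i => A i (f j)) = 0) (u : m → R) :
    ∑ j, g j * (Aᵀ *ᵥ u) (f j) = 0 := by
  simp only [mulVec, dotProduct, transpose_apply, Finset.mul_sum]
  rw [Finset.sum_comm]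
  refine Finset.sum_eq_zero fun i _ => ?_
  have hgi := congrFun hg i
  simp only [Finset.sum_apply, Pi.smul_apply, smul_eq_mul, Pi.zero_apply] at hgi
  simp_rw [← mul_assoc, ← Finset.sum_mul, hgi, zero_mul]

theorem RSPorder.exists_mulVec_transpose_eq_zero_of_ne {m n : ℕ}
    {A : Matrix (Fin m) (Fin n) ℝ} {K : ℕ} (h : RSPorder A K) {S : Finset (Fin n)}
    (hS : S.card ≤ K) {j₀ : Fin n} (hj₀ : j₀ ∈ S) :
    ∃ u : Fin m → ℝ, (∀ j ∈ S, j ≠ j₀ → (Aᵀ *ᵥ u) j = 0) ∧ 0 < (Aᵀ *ᵥ u) j₀ := by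
  obtain ⟨-, ⟨u, rfl⟩, hu, -⟩ := h S hS
  obtain ⟨-, ⟨v, rfl⟩, hv, hv'⟩ :=
    h (S.erase j₀) (Finset.card_erase_le.trans hS)
  refine ⟨u - v, fun j hj hne => ?_, ?_⟩
  · rw [mulVec_sub, Pi.sub_apply, hu j hj, hv j (Finset.mem_erase.2 ⟨hne, hj⟩), sub_self]
  · rw [mulVec_sub, Pi.sub_apply, hu j₀ hj₀, sub_pos]
    exact hv' j₀ (Finset.notMem_erase j₀ S)

theorem RSPorder.linearIndependent_cols {m n : ℕ} {A : Matrix (Fin m) (Fin n) ℝ} {K : ℕ}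
    (h : RSPorder A K) {S : Finset (Fin n)} (hS : S.card ≤ K) :
    LinearIndependent ℝ (fun j : {i : Fin n // i ∈ S} => fun i : Fin m => A i j.1) := by
  rw [Fintype.linearIndependent_iff]
  intro g hg j₀
  obtain ⟨u, hu_zero, hu_pos⟩ := h.exists_mulVec_transpose_eq_zero_of_ne hS j₀.2
  have horth := sum_mul_mulVec_transpose_eq_zero A Subtype.val g hg u
  rw [Fintype.sum_eq_single j₀ fun j hj => by
    rw [hu_zero j j.2 (Subtype.coe_ne_coe.2 hj), mul_zero]] at horth
  exact (mul_eq_zero.1 horth).resolve_right hu_pos.ne'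

theorem not_linearIndependent_cols_univ {m n : ℕ} (hmn : m < n)
    (A : Matrix (Fin m) (Fin n) ℝ) :
    ¬ LinearIndependent ℝ
      (fun j : {i : Fin n // i ∈ Finset.univ} => fun i : Fin m => A i j.1) := by
  intro hli
  have hcard := hli.fintype_card_le_finrank
  simp only [Fintype.card_coe, Finset.card_univ, Fintype.card_fin, Module.finrank_fin_fun]
    at hcard
  omega

theorem lt_spark_of_linearIndependent {m n : ℕ} (hmn : m < n)
    (A : Matrix (Fin m) (Fin n) ℝ) {K : ℕ}
    (hK : ∀ S : Finset (Fin n), S.card ≤ K →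
      LinearIndependent ℝ (fun j : {i : Fin n // i ∈ S} => fun i : Fin m => A i j.1)) :
    K < spark A := by
  refine Nat.lt_iff_add_one_le.2 (le_csInf
    ⟨n, Finset.univ, Finset.card_fin n, not_linearIndependent_cols_univ hmn A⟩ ?_)
  rintro k ⟨S, rfl, hdep⟩
  by_contra! hle
  exact hdep (hK S (Nat.lt_add_one_iff.1 hle))

theorem stmt_13 {m n : ℕ} (hmn : m < n) (A : Matrix (Fin m) (Fin n) ℝ) (K : ℕ)
    (h : RSPorder A K) :
    (∀ S : Finset (Fin n), S.card = K →
      LinearIndependent ℝ (fun j : {i : Fin n // i ∈ S} => fun i : Fin m => A i j.1)) ∧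
    K < spark A :=
  ⟨fun _ hS => h.linearIndependent_cols hS.le,
    lt_spark_of_linearIndependent hmn A fun _ hS => h.linearIndependent_cols hS⟩
end

section
/- Let A be a real m×n matrix with m < n. If Aᵀ satisfies the range space property of order K, then every x̂ ∈ ℝ^n with x̂ ≥ 0 and ‖x̂‖₀ ≤ K is both the unique least ℓ1-norm nonnegative solution and the unique sparsest nonnegative solution to the system Az = Ax̂. -/
open Matrix

/-!
Let `w = z - x`, a kernel vector of `A` whose negative entries lie in the support of `x`.
The range space property yields `η = Aᵀu` equal to `1` on those negative entries and `< 1`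
elsewhere, so that `∑ wᵢ - η ⬝ᵥ w = ∑ (1 - ηᵢ) wᵢ ≥ 0` while `η ⬝ᵥ w = u ⬝ᵥ A w = 0`.
If `w ≤ 0` this forces `w = 0`; otherwise a positive entry of `w` makes the inequality strict.
Hence `‖x‖₁ < ‖z‖₁`, and swapping `x` and `z` shows that `z` cannot be at least as sparse as `x`.
-/

section DotProduct

variable {ι : Type*} [Fintype ι] {η w : ι → ℝ}

lemma mul_le_self_of_le_one {a b : ℝ} (ha : a ≤ 1) (hb : a < 1 → 0 ≤ b) : a * b ≤ b := by
  rcases ha.lt_or_eq with hlt | rfl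
  · exact mul_le_of_le_one_left (hb hlt) ha
  · rw [one_mul]

lemma dotProduct_le_sum (hη : ∀ i, η i ≤ 1) (hw : ∀ i, η i < 1 → 0 ≤ w i) :
    η ⬝ᵥ w ≤ ∑ i, w i :=
  Finset.sum_le_sum fun i _ => mul_le_self_of_le_one (hη i) (hw i)

lemma dotProduct_lt_sum (hη : ∀ i, η i ≤ 1) (hw : ∀ i, η i < 1 → 0 ≤ w i)
    (hpos : ∃ i, η i < 1 ∧ 0 < w i) : η ⬝ᵥ w < ∑ i, w i := by
  obtain ⟨j, hηj, hwj⟩ := hpos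
  exact Finset.sum_lt_sum (fun i _ => mul_le_self_of_le_one (hη i) (hw i))
    ⟨j, Finset.mem_univ j, mul_lt_of_lt_one_left hwj hηj⟩

end DotProduct

lemma transpose_mulVec_dotProduct_eq_zero {R m n : Type*} [CommSemiring R] [Fintype m]
    [Fintype n] {A : Matrix m n R} (u : m → R) {w : n → R} (hw : A *ᵥ w = 0) : (Aᵀ *ᵥ u) ⬝ᵥ w = 0 := by
  rw [mulVec_transpose, ← dotProduct_mulVec, hw, dotProduct_zero]

lemma RSPorder.sum_pos_of_mulVec_eq_zero {m n K : ℕ} {A : Matrix (Fin m) (Fin n) ℝ}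
    (h : RSPorder A K) {w : Fin n → ℝ} (hAw : A *ᵥ w = 0) (hw : w ≠ 0)
    (hneg : {i | w i < 0}.ncard ≤ K) : 0 < ∑ i, w i := by
  classical
  obtain ⟨η, ⟨u, rfl⟩, hη_one, hη_lt⟩ :=
    h {i | w i < 0}.toFinset (by rwa [← Set.ncard_eq_toFinset_card'])
  simp only [Set.mem_toFinset, Set.mem_ofPred_eq] at hη_one hη_lt
  have hη : ∀ i, (Aᵀ *ᵥ u) i ≤ 1 := fun i =>
    if hi : w i < 0 then (hη_one i hi).le else (hη_lt i hi).le
  have hw_nonneg : ∀ i, (Aᵀ *ᵥ u) i < 1 → 0 ≤ w i := fun i hi =>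
    not_lt.mp fun hwi => hi.ne (hη_one i hwi)
  have hdot := transpose_mulVec_dotProduct_eq_zero u hAw
  by_cases hpos : ∃ i, 0 < w i
  · obtain ⟨j, hj⟩ := hpos
    have := dotProduct_lt_sum hη hw_nonneg ⟨j, hη_lt j (not_lt.mpr hj.le), hj⟩
    linarith
  · simp only [not_exists, not_lt] at hpos
    obtain ⟨j, hj⟩ := Function.ne_iff.mp hw
    have hsum_neg : ∑ i, w i < 0 :=
      Finset.sum_neg' (fun i _ => hpos i) ⟨j, Finset.mem_univ j, (hpos j).lt_of_ne hj⟩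
    have := dotProduct_le_sum hη hw_nonneg
    linarith

lemma RSPorder.sum_lt_sum_of_mulVec_eq {m n K : ℕ} {A : Matrix (Fin m) (Fin n) ℝ}
    (h : RSPorder A K) {x z : Fin n → ℝ} (hK : {i | x i ≠ 0}.ncard ≤ K)
    (hz : 0 ≤ z) (hAz : A *ᵥ z = A *ᵥ x) (hne : z ≠ x) : ∑ i, x i < ∑ i, z i := by
  have hneg_supp : {i | (z - x) i < 0} ⊆ {i | x i ≠ 0} := fun i hi hxi => by
    simp only [Set.mem_ofPred_eq, Pi.sub_apply, hxi, sub_zero] at hi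
    exact (hz i).not_gt hi
  have := h.sum_pos_of_mulVec_eq_zero (by rw [mulVec_sub, hAz, sub_self]) (sub_ne_zero.mpr hne)
    ((Set.ncard_le_ncard hneg_supp).trans hK)
  simpa [Finset.sum_sub_distrib] using this

theorem stmt_15_general {m n : ℕ} (A : Matrix (Fin m) (Fin n) ℝ) (K : ℕ)
    (h : RSPorder A K)
    (x : Fin n → ℝ) (hx : 0 ≤ x) (hK : {i : Fin n | x i ≠ 0}.ncard ≤ K) :
    (∀ z : Fin n → ℝ, A.mulVec z = A.mulVec x → 0 ≤ z → z ≠ x →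
        ∑ i, |x i| < ∑ i, |z i|) ∧
    (∀ z : Fin n → ℝ, A.mulVec z = A.mulVec x → 0 ≤ z → z ≠ x →
        {i : Fin n | x i ≠ 0}.ncard < {i : Fin n | z i ≠ 0}.ncard) := by
  refine ⟨fun z hAz hz hne => ?_, fun z hAz hz hne => ?_⟩
  · simpa only [abs_of_nonneg (hx _), abs_of_nonneg (hz _)] using
      h.sum_lt_sum_of_mulVec_eq hK hz hAz hne
  · by_contra! hsparser
    have hxz := h.sum_lt_sum_of_mulVec_eq hK hz hAz hne
    have hzx := h.sum_lt_sum_of_mulVec_eq (hsparser.trans hK) hx hAz.symm hne.symm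
    linarith

theorem stmt_15 {m n : ℕ} (hmn : m < n) (A : Matrix (Fin m) (Fin n) ℝ) (K : ℕ)
    (h : RSPorder A K)
    (x : Fin n → ℝ) (hx : 0 ≤ x) (hK : {i : Fin n | x i ≠ 0}.ncard ≤ K) :
    (∀ z : Fin n → ℝ, A.mulVec z = A.mulVec x → 0 ≤ z → z ≠ x →
        ∑ i, |x i| < ∑ i, |z i|) ∧
    (∀ z : Fin n → ℝ, A.mulVec z = A.mulVec x → 0 ≤ z → z ≠ x →
        {i : Fin n | x i ≠ 0}.ncard < {i : Fin n | z i ≠ 0}.ncard) :=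
  stmt_15_general A K h x hx hK
end
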